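/- Let Z(Y,X) be the zoom space of a Tychonoff space Y with respect to a family X = (X_i)_{i∈I_Y} of nonempty Tychonoff spaces. Then: (i) Z(Y,X) is Tychonoff, Y is a quotient of Z(Y,X), each X_i is homeomorphic to a clopen subspace of Z(Y,X), and for every selector s (choosing a point s(i) ∈ X_i for each i ∈ I_Y) the set (Y∖I_Y) ∪ s(I_Y) is a closed subspace of Z(Y,X) homeomorphic to Y; (ii) if Y is a dense subspace of Ỹ and each X_i is a (dense) subspace of X̃_i, then Z(Y,X) is a (dense) subspace of Z(Ỹ,X̃); (iii) if Y and all X_i are compact (respectively Lindelöf), then Z(Y,X) is compact (respectively Lindelöf); (iv) if cY is a compactification of Y and each cX_i is a compactification of X_i, then Z(cY, (cX_i)_i) is a compactification of Z(Y,X). -/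

import Mathlib

noncomputable section
open Classical Set Topology Filter Ordinal

universe u v

namespace FBorelPaper

/-! ### Ordinal parity -/

/-- The first uncountable ordinal. -/
def omega1 : Ordinal.{0} := Ordinal.omega 1

/-- An ordinal `a = λ + m` (with `λ` limit or zero, `m < ω`) is *even* iff `m` is even. -/
def EvenOrd (a : Ordinal.{0}) : Prop := a % 2 = 0

/-- An ordinal `a = λ + m` (with `λ` limit or zero, `m < ω`) is *odd* iff `m` is odd. -/
def OddOrd (a : Ordinal.{0}) : Prop := a % 2 = 1

/-- For `a = λ + 2n + i` (with `λ` limit or zero, `n < ω`, `i ∈ {0,1}`),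
`ordPrime a = λ + n` (the ordinal `α'` of the paper). -/
def ordPrime (a : Ordinal.{0}) : Ordinal.{0} :=
  Ordinal.omega0 * (a / Ordinal.omega0) + (a % Ordinal.omega0) / 2

/-! ### The F-Borel hierarchy -/

/-- The `F`-Borel hierarchy of a topological space: `FBorel Y 0` is the family of closed
sets, and for `0 < a`, `FBorel Y a` consists of all countable unions (for odd `a`),
resp. countable intersections (for even `a`), of members of `⋃ b < a, FBorel Y b`. -/
def FBorel (Y : Type u) [TopologicalSpace Y] : Ordinal.{0} → Set (Set Y) :=
  WellFounded.fix Ordinal.lt_wf (C := fun _ => Set (Set Y)) fun a ih =>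
    if a = 0 then { F | IsClosed F }
    else if EvenOrd a then
      { S | ∃ f : ℕ → Set Y, (∀ n, ∃ b, ∃ h : b < a, f n ∈ ih b h) ∧ S = ⋂ n, f n }
    else
      { S | ∃ f : ℕ → Set Y, (∀ n, ∃ b, ∃ h : b < a, f n ∈ ih b h) ∧ S = ⋃ n, f n }

/-- The list `(σ 0, …, σ (k-1))` of the first `k` values of `σ : ℕ → ℕ`. -/
def seqPrefix (σ : ℕ → ℕ) (k : ℕ) : List ℕ := List.ofFn fun i : Fin k => σ i

/-- A Suslin scheme: a monotone family of sets indexed by finite sequences. -/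
def IsSuslinScheme {Y : Type u} (C : List ℕ → Set Y) : Prop :=
  ∀ ⦃s t : List ℕ⦄, s <+: t → C t ⊆ C s

/-- The Suslin operation `A(C) = ⋃_{σ ∈ ω^ω} ⋂_k C(σ|k)`. -/
def suslinOp {Y : Type u} (C : List ℕ → Set Y) : Set Y :=
  ⋃ σ : ℕ → ℕ, ⋂ k : ℕ, C (seqPrefix σ k)

/-- The Suslin-F subsets of `Y`: results of the Suslin operation applied to schemes of
closed sets. -/
def SuslinF (Y : Type u) [TopologicalSpace Y] : Set (Set Y) :=
  { S | ∃ C : List ℕ → Set Y, (∀ s, IsClosed (C s)) ∧ S = suslinOp C }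

/-- The classes `F_a(Y)` for `a ≤ ω₁`, where `F_{ω₁}(Y)` is the class of Suslin-F sets. -/
def FClass (Y : Type u) [TopologicalSpace Y] (a : Ordinal.{0}) : Set (Set Y) :=
  if a < omega1 then FBorel Y a else SuslinF Y

/-- `ComplIn Y X` is the complexity of `X` in `Y`: the least `a ≤ ω₁` with `X ∈ F_a(Y)`. -/
def ComplIn (Y : Type u) [TopologicalSpace Y] (X : Set Y) : Ordinal.{0} :=
  sInf { a : Ordinal.{0} | a ≤ omega1 ∧ X ∈ FClass Y a }

/-! ### Compactifications, K-analytic spaces, local complexity -/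

/-- `(K, e)` is a compactification of `X`: `K` is compact Hausdorff and `e` is a dense
embedding of `X` into `K`. -/
def IsCompactification (X : Type u) [TopologicalSpace X] (K : Type u) [TopologicalSpace K]
    (e : X → K) : Prop :=
  CompactSpace K ∧ T2Space K ∧ IsEmbedding e ∧ DenseRange e

/-- The set `Compl(X)` of all complexities attained by `X` in its compactifications. -/
def AttainedCompl (X : Type u) [TopologicalSpace X] : Set Ordinal.{0} :=
  { γ | ∃ (K : Type u) (_ : TopologicalSpace K) (e : X → K),
      IsCompactification X K e ∧ Set.range e ∈ SuslinF K ∧ γ = ComplIn K (Set.range e) }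

/-- A topological space is K-analytic iff it embeds as a Suslin-F subset of some compact
Hausdorff space. -/
def IsKAnalytic (X : Type u) [TopologicalSpace X] : Prop :=
  ∃ (K : Type u) (_ : TopologicalSpace K) (e : X → K),
    CompactSpace K ∧ T2Space K ∧ IsEmbedding e ∧ Set.range e ∈ SuslinF K

/-- The local complexity `Compl_y(X, Y)`: the least complexity of `cl(U) ∩ X` in `Y` over
all open neighborhoods `U` of `y` in `Y`. -/
def locComplAt (Y : Type u) [TopologicalSpace Y] (X : Set Y) (y : Y) : Ordinal.{0} :=
  sInf { γ : Ordinal.{0} | ∃ U : Set Y, IsOpen U ∧ y ∈ U ∧ γ = ComplIn Y (closure U ∩ X) }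

/-- The local complexity `Compl_loc(X, Y) = sup_{x ∈ X} Compl_x(X, Y)`. -/
def locCompl (Y : Type u) [TopologicalSpace Y] (X : Set Y) : Ordinal.{0} :=
  ⨆ x : X, locComplAt Y X (x : Y)

/-- The local complexity `Compl_locbar(X, Y) = sup_{y ∈ Y} Compl_y(X, Y)`. -/
def locComplBar (Y : Type u) [TopologicalSpace Y] (X : Set Y) : Ordinal.{0} :=
  ⨆ y : Y, locComplAt Y X y

/-! ### Trees on ω -/

/-- A tree on `ω`: a set of finite sequences closed under initial segments. -/
def IsTree (T : Set (List ℕ)) : Prop := ∀ ⦃s t : List ℕ⦄, s <+: t → t ∈ T → s ∈ T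

/-- A tree is well-founded iff it carries no infinite branch. -/
def WellFoundedTree (T : Set (List ℕ)) : Prop := ¬ ∃ σ : ℕ → ℕ, ∀ k : ℕ, seqPrefix σ k ∈ T

/-- `t` is a leaf of `T`: it belongs to `T` and has no immediate successor in `T`. -/
def IsLeafOf (T : Set (List ℕ)) (t : List ℕ) : Prop := t ∈ T ∧ ∀ n : ℕ, t ++ [n] ∉ T

/-- The tree `T^t = {s | t⌢s ∈ T}` corresponding to `t` in `T`. -/
def subtreeAt (T : Set (List ℕ)) (t : List ℕ) : Set (List ℕ) := { s | t ++ s ∈ T }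

/-- The smallest tree containing a set `S` of finite sequences. -/
def clTr (S : Set (List ℕ)) : Set (List ℕ) := { u | ∃ s ∈ S, u <+: s }

/-- The leaf derivative: keep the elements having some proper extension in `T`. -/
def leafDeriv (T : Set (List ℕ)) : Set (List ℕ) := { t ∈ T | ∃ s ∈ T, t <+: s ∧ t ≠ s }

/-- The derivative `D_iie`: keep the `t ∈ T` admitting infinitely many pairwise
incomparable extensions in `T` of pairwise different lengths. -/
def Diie (T : Set (List ℕ)) : Set (List ℕ) :=
  { t ∈ T | ∃ g : ℕ → List ℕ, (∀ n, g n ∈ T ∧ t <+: g n) ∧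
      ∀ ⦃m n : ℕ⦄, m < n →
        (¬ g m <+: g n) ∧ (¬ g n <+: g m) ∧ (g m).length ≠ (g n).length }

/-- Transfinitely iterated derivative, starting from `cl_Tr S` and taking intersections
at limit stages. -/
def iterDeriv (D : Set (List ℕ) → Set (List ℕ)) (S : Set (List ℕ)) (γ : Ordinal.{0}) :
    Set (List ℕ) :=
  Ordinal.limitRecOn γ (clTr S) (fun _ ih => D ih)
    (fun a _ ih => ⋂ b : Ordinal.{0}, ⋂ h : b < a, ih b h)

/-- The rank associated with the leaf derivative: the least `γ` such that the `(γ+1)`-st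
iterated leaf derivative is empty, and `ω₁` if there is no such countable ordinal. -/
def leafRank (T : Set (List ℕ)) : Ordinal.{0} :=
  if ∃ γ : Ordinal.{0}, γ < omega1 ∧ iterDeriv leafDeriv T (γ + 1) = ∅ then
    sInf { γ : Ordinal.{0} | iterDeriv leafDeriv T (γ + 1) = ∅ }
  else omega1

/-- `E` is the canonical extension of the `l(T)`-scheme `H` to the whole of `T`:
it agrees with `H` on the leaves of `T`, and at a non-leaf `t ∈ T` it is the union
(resp. the intersection) of its values at the immediate successors of `t` in `T` when
the leaf-rank of `T^t` is odd (resp. even). -/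
def IsSchemeExtension (Y : Type u) [TopologicalSpace Y] (T : Set (List ℕ))
    (H E : List ℕ → Set Y) : Prop :=
  (∀ t, IsLeafOf T t → E t = H t) ∧
  (∀ t ∈ T, ¬ IsLeafOf T t → OddOrd (leafRank (subtreeAt T t)) →
      E t = ⋃ n ∈ { n : ℕ | t ++ [n] ∈ T }, E (t ++ [n])) ∧
  (∀ t ∈ T, ¬ IsLeafOf T t → EvenOrd (leafRank (subtreeAt T t)) →
      E t = ⋂ n ∈ { n : ℕ | t ++ [n] ∈ T }, E (t ++ [n]))

/-- `H` (an `l(T)`-scheme of subsets of `X`) is a *universal simple `F_α`-representation*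
of `X`: `r_l(T) ≤ α`, and for every space `Y` containing (a copy of) `X`, the extension
of the scheme of closures `(cl_Y (H t))_t` computes `X` at the root. -/
def HasUniversalSimpleRep (X : Type u) [TopologicalSpace X] (α : Ordinal.{0}) : Prop :=
  ∃ (T : Set (List ℕ)) (H : List ℕ → Set X), IsTree T ∧ WellFoundedTree T ∧ [] ∈ T ∧
    leafRank T ≤ α ∧
    ∀ (Y : Type u) (_ : TopologicalSpace Y) (e : X → Y), IsEmbedding e →
      ∃ E : List ℕ → Set Y,
        IsSchemeExtension Y T (fun t => closure (e '' H t)) E ∧ E [] = Set.range e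

/-! ### Canonical trees -/

/-- Auxiliary indices for the canonical trees: at a successor `a = b + 1` every index is
`b`, and at a countable limit the indices enumerate all ordinals `< a` injectively. -/
def canonIdx (a : Ordinal.{0}) (n : ℕ) : Ordinal.{0} :=
  if hs : ∃ b, a = b + 1 then hs.choose
  else if hf : ∃ f : ℕ → Ordinal.{0}, Function.Injective f ∧ Set.range f = Set.Iio a then
    hf.choose n
  else 0

theorem canonIdx_lt {a : Ordinal.{0}} (h0 : a ≠ 0) (n : ℕ) : canonIdx a n < a := by
  unfold canonIdx
  split
  · next hs =>
      conv_rhs => rw [hs.choose_spec]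
      rw [Ordinal.add_one_eq_succ]
      exact Order.lt_succ _
  · split
    · next hf =>
        have hmem : hf.choose n ∈ Set.range hf.choose := Set.mem_range_self n
        rw [hf.choose_spec.2] at hmem
        exact hmem
    · first
        | exact pos_iff_ne_zero.mpr h0
        | exact lt_of_le_of_ne (zero_le _) (Ne.symm h0)
        | exact Ordinal.pos_iff_ne_zero.mpr h0

/-- The canonical "maximal" trees `T_α` of leaf-rank `α < ω₁` (with `T_α = ω^{<ω}` for
`α ≥ ω₁`): `T_0 = {∅}`, `T_{α+1} = {∅} ∪ ⋃_n n⌢T_α`, and at countable limits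
`T_α = {∅} ∪ ⋃_n n⌢T_{π_α(n)}` for an injective enumeration `π_α` of `α`. -/
def canonTree : Ordinal.{0} → Set (List ℕ) :=
  WellFounded.fix Ordinal.lt_wf (C := fun _ => Set (List ℕ)) fun a ih =>
    if h0 : a = 0 then {([] : List ℕ)}
    else if omega1 ≤ a then Set.univ
    else {([] : List ℕ)} ∪ ⋃ n : ℕ, (List.cons n) '' ih (canonIdx a n) (canonIdx_lt h0 n)

/-- The canonical trees `T^c_α`: `T_{α'}` for even `α`, and `{∅} ∪ 1⌢T_{α'}` for odd `α`. -/
def canonTreeC (a : Ordinal.{0}) : Set (List ℕ) :=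
  if EvenOrd a then canonTree (ordPrime a)
  else {([] : List ℕ)} ∪ (List.cons 1) '' canonTree (ordPrime a)

/-- The canonical trees `T^c_{α,i} = {∅} ∪ i⌢T_{α'}` (for odd `α`). -/
def canonTreeCi (a : Ordinal.{0}) (i : ℕ) : Set (List ℕ) :=
  {([] : List ℕ)} ∪ (List.cons i) '' canonTree (ordPrime a)

/-! ### Admissible maps, `R_T` and regular representations -/

/-- An admissible map on a tree `T`: monotone w.r.t. extension, with
`|φ(t)| = t(0) + ⋯ + t(|t|-1)` for all `t ∈ T`. -/
def Admissible (T : Set (List ℕ)) (φ : List ℕ → List ℕ) : Prop :=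
  (∀ ⦃s t : List ℕ⦄, s ∈ T → t ∈ T → s <+: t → φ s <+: φ t) ∧
  (∀ t ∈ T, (φ t).length = t.sum)

/-- `R_T(C)`: the points of `C(∅)` admitting an admissible witness map along `T`. -/
def RT {Y : Type u} (T : Set (List ℕ)) (C : List ℕ → Set Y) : Set Y :=
  { x | x ∈ C [] ∧ ∃ φ : List ℕ → List ℕ, Admissible T φ ∧ ∀ t ∈ T, x ∈ C (φ t) }

/-- `R_α(C) = R_{T^c_α}(C)`. -/
def Ralpha {Y : Type u} (a : Ordinal.{0}) (C : List ℕ → Set Y) : Set Y :=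
  RT (canonTreeC a) C

/-- A Suslin scheme `C` of subsets of `X ⊆ Y` is *complete on `X`*: it is a Suslin scheme
on `X` (it consists of subsets of `X` and the Suslin operation applied to it covers `X`)
such that every nontrivial filter containing, for each `n`, a set `C s` with `|s| = n`,
has an accumulation point in `X`. -/
def IsCompleteOn (Y : Type u) [TopologicalSpace Y] (X : Set Y) (C : List ℕ → Set Y) :
    Prop :=
  IsSuslinScheme C ∧ (∀ s, C s ⊆ X) ∧ X ⊆ suslinOp C ∧
  ∀ F : Filter Y, F.NeBot → (∀ n : ℕ, ∃ s : List ℕ, s.length = n ∧ C s ∈ F) →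
    ∃ x ∈ X, ClusterPt x F

/-- The tree `S_C(y)` of finite sequences `s` with `y ∈ cl_Y (C s)`. -/
def SCtree (Y : Type u) [TopologicalSpace Y] (C : List ℕ → Set Y) (y : Y) :
    Set (List ℕ) :=
  { s : List ℕ | y ∈ closure (C s) }

/-! ### Zoom spaces -/

/-- The set of isolated points of a topological space. -/
def IsolPts (Y : Type u) [TopologicalSpace Y] : Set Y := { y | IsOpen ({y} : Set Y) }

/-- The underlying set of the zoom space `Z(Y, X)`: the non-isolated points of `Y`
together with the disjoint union of the spaces `X i`, `i ∈ I_Y`. -/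
def ZoomCarrier (Y : Type u) [TopologicalSpace Y] (X : IsolPts Y → Type v) :
    Type (max u v) :=
  ({ y : Y // y ∉ IsolPts Y }) ⊕ ((i : IsolPts Y) × X i)

/-- The basic set `V_U ⊆ Z(Y, X)` associated with `U ⊆ Y`:
`V_U = (U ∖ I_Y) ∪ ⋃ {X i | i ∈ U ∩ I_Y}`. -/
def zoomVSet (Y : Type u) [TopologicalSpace Y] (X : IsolPts Y → Type v) (U : Set Y) :
    Set (ZoomCarrier Y X) :=
  { z | Sum.elim (fun y : { y : Y // y ∉ IsolPts Y } => (y : Y) ∈ U)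
      (fun p : (i : IsolPts Y) × X i => (p.1 : Y) ∈ U) z }

/-- The topology of the zoom space `Z(Y, X)`, generated by the open subsets of the
spaces `X i` together with the sets `V_U` for `U` open in `Y`. -/
instance zoomTopology (Y : Type u) [TopologicalSpace Y] (X : IsolPts Y → Type v)
    [∀ i, TopologicalSpace (X i)] : TopologicalSpace (ZoomCarrier Y X) :=
  TopologicalSpace.generateFrom
    ({ B | ∃ (i : IsolPts Y) (W : Set (X i)), IsOpen W ∧
        B = Sum.inr '' ((Sigma.mk i) '' W) } ∪
     { B | ∃ U : Set Y, IsOpen U ∧ B = zoomVSet Y X U })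

/-- The subset of `Z(Y, X)` which is the underlying set of the zoom space `Z(Ys, A)` of
a subspace `Ys ⊆ Y` with respect to subspaces `A i ⊆ X i`
(here the isolated points of `Ys` are identified with those of `Y`). -/
def zoomSub (Y : Type u) [TopologicalSpace Y] (X : IsolPts Y → Type v) (Ys : Set Y)
    (A : ∀ i : IsolPts Y, Set (X i)) : Set (ZoomCarrier Y X) :=
  { z | Sum.elim (fun y : { y : Y // y ∉ IsolPts Y } => (y : Y) ∈ Ys)
      (fun p : (i : IsolPts Y) × X i => p.2 ∈ A p.1) z }

/-! ### Broom sets and broom spaces -/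

/-- A forking sequence: a sequence of nonempty finite sequences with pairwise distinct
first entries. -/
def IsForking (f : ℕ → List ℕ) : Prop :=
  (∀ n, f n ≠ []) ∧ ∀ ⦃m n : ℕ⦄, m ≠ n → (f m).head? ≠ (f n).head?

/-- The hierarchy of finite broom sets: `B ∈ B_α` iff `IsBroomB α B`.
`B_0 = {{∅}}`; for odd `α`, `B_α = B_{<α} ∪ {h⌢B | B ∈ B_{α-1}, h ∈ ω^{<ω}}`; for even
`α > 0`, `B_α = B_{<α} ∪ {⋃_n f_n⌢B_n | B_n ∈ B_{<α}, (f_n) a forking sequence}`. -/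
inductive IsBroomB : Ordinal.{0} → Set (List ℕ) → Prop
  | base : IsBroomB 0 {[]}
  | mono {β α : Ordinal.{0}} {B : Set (List ℕ)} : β < α → IsBroomB β B → IsBroomB α B
  | odd {β : Ordinal.{0}} {B : Set (List ℕ)} (h : List ℕ) : EvenOrd β → IsBroomB β B →
      IsBroomB (β + 1) ((fun s => h ++ s) '' B)
  | even {α : Ordinal.{0}} {f : ℕ → List ℕ} {Bs : ℕ → Set (List ℕ)}
      (g : ℕ → Ordinal.{0}) :
      0 < α → EvenOrd α → IsForking f →
      (∀ n : ℕ, g n < α) → (∀ n : ℕ, IsBroomB (g n) (Bs n)) →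
      IsBroomB α (⋃ n : ℕ, (fun s => f n ++ s) '' Bs n)

/-- The infinite sequence `s⌢ν` obtained by extending the finite sequence `s` by `ν`. -/
def seqAppend (s : List ℕ) (ν : ℕ → ℕ) : ℕ → ℕ :=
  fun k => if h : k < s.length then s.get ⟨k, h⟩ else ν (k - s.length)

/-- `A` is a broom-extension of `B`:
`A = {s⌢f^s_n⌢ν^s_n | s ∈ B, n ∈ ω}` for forking sequences `(f^s_n)_n, s ∈ B`, and
points `ν^s_n ∈ ω^ω`. -/
def IsBroomExtension (B : Set (List ℕ)) (A : Set (ℕ → ℕ)) : Prop :=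
  ∃ (f : List ℕ → ℕ → List ℕ) (ν : List ℕ → ℕ → (ℕ → ℕ)),
    (∀ s ∈ B, IsForking (f s)) ∧
    A = { σ : ℕ → ℕ | ∃ s ∈ B, ∃ n : ℕ, σ = seqAppend (s ++ f s n) (ν s n) }

/-- The hierarchy of infinite broom sets: `A ∈ A_α` iff `A` is a broom-extension of some
`B ∈ B_α`. -/
def IsBroomA (α : Ordinal.{0}) (A : Set (ℕ → ℕ)) : Prop :=
  ∃ B : Set (List ℕ), IsBroomB α B ∧ IsBroomExtension B A

/-- `u` is a finite initial segment of the infinite sequence `σ`. -/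
def InfExtends (u : List ℕ) (σ : ℕ → ℕ) : Prop := seqPrefix σ u.length = u

/-- The tree of all finite initial segments of members of a set of infinite sequences. -/
def clTrInf (S : Set (ℕ → ℕ)) : Set (List ℕ) := { u | ∃ σ ∈ S, InfExtends u σ }

/-- The broom space `T_𝒜` on `ω^ω ∪ {∞}` (with `∞ = none`): every point of `ω^ω` is
isolated, and the neighborhood subbasis at `∞` consists of the complements of single
points of `ω^ω` and of the complements of the sets `A ∈ 𝒜`. -/
def broomTop (𝒜 : Set (Set (ℕ → ℕ))) : TopologicalSpace (Option (ℕ → ℕ)) :=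
  TopologicalSpace.generateFrom
    ({ S | ∃ σ : ℕ → ℕ, S = {Option.some σ} } ∪
     { S | ∃ σ : ℕ → ℕ, S = insert Option.none (Option.some '' ({σ}ᶜ)) } ∪
     { S | ∃ A ∈ 𝒜, S = insert Option.none (Option.some '' Aᶜ) })

/-!
Near a non-isolated point `y` the zoom space looks like `Y`: its neighbourhoods are the
preimages of those of `y` under the projection `proj : Z(Y, X) → Y`, while each `X i` sits
inside as an open embedding with clopen range `proj ⁻¹' {i}`. A selector is a continuous
section of `proj`, which gives the quotient map and, `Z(Y, X)` being Hausdorff, the closed copy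
of `Y`. A cluster point `y` of the projection of a filter lifts either to `y` itself or, when
`y` is isolated, into the compact (Lindelöf) copy of `X y`. For dense `D ⊆ Y` the isolated
points of `D` are those of `Y`, and the generators of the zoom topology of `Z(Y, X)` pull back
exactly to those of `Z(D, A)`.
-/

section DenseIsolPts

variable {Y : Type u} [TopologicalSpace Y] {D : Set Y}

lemma isolPts_subset_of_dense (hD : Dense D) : IsolPts Y ⊆ D := fun y hy => by
  obtain ⟨_, rfl, hyD⟩ := hD.inter_open_nonempty {y} hy ⟨y, rfl⟩
  exact hyD

lemma mem_isolPts_subtype_iff [T1Space Y] (hD : Dense D) (y : D) :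
    y ∈ IsolPts D ↔ (y : Y) ∈ IsolPts Y := by
  refine ⟨fun hy => ?_, fun hy => isOpen_induced_iff.2 ⟨{(y : Y)}, hy, ?_⟩⟩
  · obtain ⟨U, hU, hUy⟩ := isOpen_induced_iff.1 hy
    have hyU : (y : Y) ∈ U := show y ∈ Subtype.val ⁻¹' U from hUy ▸ rfl
    have hUD : U ∩ D = {(y : Y)} := by
      rw [inter_comm, ← Subtype.image_preimage_coe, hUy, image_singleton]
    have hsub : U ⊆ {(y : Y)} := by
      simpa only [hUD, closure_singleton] using hD.open_subset_closure_inter hU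
    rwa [hsub.antisymm (singleton_subset_iff.2 hyU)] at hU
  · ext z
    simp [Subtype.ext_iff]

def isolPtsEquivOfDense [T1Space Y] (hD : Dense D) : IsolPts D ≃ IsolPts Y where
  toFun j := ⟨j.1, (mem_isolPts_subtype_iff hD j.1).1 j.2⟩
  invFun i := ⟨⟨i, isolPts_subset_of_dense hD i.2⟩, (mem_isolPts_subtype_iff hD _).2 i.2⟩
  left_inv _ := rfl
  right_inv _ := rfl

end DenseIsolPts

namespace ZoomCarrier

section Maps

variable {Y : Type u} [TopologicalSpace Y] {X : IsolPts Y → Type v}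

def proj : ZoomCarrier Y X → Y :=
  Sum.elim Subtype.val fun p => p.1

-- Bare `(Sum.inl y : ZoomCarrier Y X)` is typed as a sum, so `𝓝` would pick the sum topology.
abbrev inl (y : {y : Y // y ∉ IsolPts Y}) : ZoomCarrier Y X :=
  Sum.inl y

def mk (i : IsolPts Y) (x : X i) : ZoomCarrier Y X :=
  Sum.inr ⟨i, x⟩

def ofSelector (s : ∀ i, X i) (y : Y) : ZoomCarrier Y X :=
  if h : y ∈ IsolPts Y then mk ⟨y, h⟩ (s ⟨y, h⟩) else inl ⟨y, h⟩

lemma mk_injective (i : IsolPts Y) : Function.Injective (mk (X := X) i) := fun _ _ h =>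
  eq_of_heq (Sigma.mk.inj_iff.1 (Sum.inr_injective h)).2

lemma range_mk (i : IsolPts Y) : range (mk (X := X) i) = proj ⁻¹' {(i : Y)} := by
  ext (y | ⟨j, x⟩)
  · exact ⟨fun ⟨_, h⟩ => (Sum.inr_ne_inl h).elim,
      fun h => (ne_of_mem_of_not_mem i.2 y.2 h.symm).elim⟩
  · refine ⟨fun ⟨x', h⟩ => h ▸ rfl, fun h => ?_⟩
    obtain rfl : j = i := Subtype.ext h
    exact ⟨x, rfl⟩

lemma zoomVSet_eq_preimage (U : Set Y) : zoomVSet Y X U = proj ⁻¹' U := by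
  ext (_ | _) <;> rfl

lemma ofSelector_coe (s : ∀ i, X i) (i : IsolPts Y) : ofSelector s i = mk i (s i) :=
  dif_pos i.2

lemma ofSelector_of_notMem (s : ∀ i, X i) {y : Y} (hy : y ∉ IsolPts Y) :
    ofSelector s y = inl ⟨y, hy⟩ :=
  dif_neg hy

lemma leftInverse_proj_ofSelector (s : ∀ i, X i) :
    Function.LeftInverse proj (ofSelector s) := by
  intro y
  by_cases h : y ∈ IsolPts Y
  · exact congrArg proj (ofSelector_coe s ⟨y, h⟩)
  · exact congrArg proj (ofSelector_of_notMem s h)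

lemma range_ofSelector (s : ∀ i, X i) :
    range (ofSelector s) = range inl ∪ range fun i => mk i (s i) := by
  ext z
  constructor
  · rintro ⟨y, rfl⟩
    by_cases h : y ∈ IsolPts Y
    exacts [Or.inr ⟨⟨y, h⟩, (ofSelector_coe s ⟨y, h⟩).symm⟩,
      Or.inl ⟨⟨y, h⟩, (ofSelector_of_notMem s h).symm⟩]
  · rintro (⟨y, rfl⟩ | ⟨i, rfl⟩)
    exacts [⟨y, ofSelector_of_notMem s y.2⟩, ⟨i, ofSelector_coe s i⟩]

end Maps

section Topology

variable {Y : Type u} [TopologicalSpace Y] {X : IsolPts Y → Type v}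
  [∀ i, TopologicalSpace (X i)]

def generators (Y : Type u) [TopologicalSpace Y] (X : IsolPts Y → Type v)
    [∀ i, TopologicalSpace (X i)] : Set (Set (ZoomCarrier Y X)) :=
  { B | ∃ (i : IsolPts Y) (W : Set (X i)), IsOpen W ∧ B = mk i '' W } ∪
    { B | ∃ U : Set Y, IsOpen U ∧ B = proj ⁻¹' U }

lemma zoomTopology_eq_generateFrom :
    zoomTopology Y X = TopologicalSpace.generateFrom (generators Y X) := by
  simp only [zoomTopology, generators, zoomVSet_eq_preimage, image_image]
  rfl

lemma isOpen_of_mem_generators {B : Set (ZoomCarrier Y X)} (hB : B ∈ generators Y X) :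
    IsOpen B := by
  rw [zoomTopology_eq_generateFrom]
  exact TopologicalSpace.isOpen_generateFrom_of_mem hB

lemma continuous_proj : Continuous (proj : ZoomCarrier Y X → Y) :=
  continuous_def.2 fun U hU => isOpen_of_mem_generators (Or.inr ⟨U, hU, rfl⟩)

lemma isOpenMap_mk (i : IsolPts Y) : IsOpenMap (mk (X := X) i) :=
  fun W hW => isOpen_of_mem_generators (Or.inl ⟨i, W, hW, rfl⟩)

lemma continuous_mk (i : IsolPts Y) : Continuous (mk (X := X) i) := by
  rw [zoomTopology_eq_generateFrom, continuous_generateFrom_iff]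
  rintro _ (⟨j, W, hW, rfl⟩ | ⟨U, hU, rfl⟩)
  · by_cases hij : j = i
    · subst hij
      rwa [(mk_injective j).preimage_image]
    · convert isOpen_empty
      refine eq_empty_of_forall_notMem fun x ⟨w, _, hw⟩ => hij (Subtype.ext ?_)
      exact congrArg proj hw
  · exact (continuous_const (y := (i : Y))).isOpen_preimage U hU

lemma isOpenEmbedding_mk (i : IsolPts Y) : IsOpenEmbedding (mk (X := X) i) :=
  .of_continuous_injective_isOpenMap (continuous_mk i) (mk_injective i) (isOpenMap_mk i)

lemma isClopen_range_mk [T1Space Y] (i : IsolPts Y) : IsClopen (range (mk (X := X) i)) := by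
  rw [range_mk]
  exact IsClopen.preimage ⟨isClosed_singleton, i.2⟩ continuous_proj

lemma nhds_inl (y : {y : Y // y ∉ IsolPts Y}) :
    𝓝 (inl y : ZoomCarrier Y X) = comap proj (𝓝 (y : Y)) := by
  refine le_antisymm (continuous_proj.tendsto (inl y)).le_comap ?_
  rw [zoomTopology_eq_generateFrom, TopologicalSpace.nhds_generateFrom]
  refine le_iInf₂ fun B ⟨hyB, hB⟩ => le_principal_iff.2 ?_
  rcases hB with ⟨i, W, -, rfl⟩ | ⟨U, hU, rfl⟩
  · exact absurd hyB fun ⟨_, _, h⟩ => Sum.inr_ne_inl h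
  · exact preimage_mem_comap (hU.mem_nhds hyB)

lemma continuous_ofSelector (s : ∀ i, X i) : Continuous (ofSelector s) := by
  refine continuous_iff_continuousAt.2 fun y => ?_
  by_cases hy : y ∈ IsolPts Y
  · rw [ContinuousAt, (isOpen_singleton_iff_nhds_eq_pure y).1 hy]
    exact tendsto_pure_nhds _ y
  · rw [ContinuousAt, ofSelector_of_notMem s hy, nhds_inl, tendsto_comap_iff,
      (leftInverse_proj_ofSelector s).comp_eq_id]
    exact tendsto_id

lemma isQuotientMap_proj [∀ i, Nonempty (X i)] : IsQuotientMap (proj : ZoomCarrier Y X → Y) :=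
  .of_inverse (continuous_ofSelector fun _ => Classical.arbitrary _) continuous_proj
    (leftInverse_proj_ofSelector _)

end Topology

section Separation

variable {Y : Type u} [TopologicalSpace Y] {X : IsolPts Y → Type v}
  [∀ i, TopologicalSpace (X i)]

lemma continuous_extend_mk [T1Space Y] {T : Type*} [TopologicalSpace T] (i : IsolPts Y)
    {g : X i → T} (hg : Continuous g) (c : T) :
    Continuous (Function.extend (mk i) g fun _ => c) := by
  refine continuous_iff_continuousAt.2 fun z => ?_
  by_cases hz : z ∈ range (mk i)
  · obtain ⟨x, rfl⟩ := hz
    rw [← (isOpenEmbedding_mk i).continuousAt_iff, Function.extend_comp (mk_injective i)]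
    exact hg.continuousAt
  · have hc : (Function.extend (mk i) g fun _ => c) =ᶠ[𝓝 z] fun _ => c :=
      eventually_of_mem ((isClopen_range_mk i).compl.isOpen.mem_nhds hz)
        fun w hw => Function.extend_apply' _ _ _ hw
    exact continuousAt_const.congr hc.symm

instance [T0Space Y] [∀ i, T0Space (X i)] : T0Space (ZoomCarrier Y X) := by
  refine t0Space_iff_inseparable _ |>.2 fun z z' h => ?_
  have hproj : proj z = proj z' := (h.map continuous_proj).eq
  rcases z with y | ⟨i, x⟩ <;> rcases z' with y' | ⟨j, x'⟩
  · exact congrArg inl (Subtype.ext hproj)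
  · exact (ne_of_mem_of_not_mem j.2 y.2 hproj.symm).elim
  · exact (ne_of_mem_of_not_mem i.2 y'.2 hproj).elim
  · obtain rfl : i = j := Subtype.ext hproj
    exact congrArg (mk i) ((isOpenEmbedding_mk i).isInducing.inseparable_iff.1 h).eq

instance [T1Space Y] [CompletelyRegularSpace Y] [∀ i, CompletelyRegularSpace (X i)] :
    CompletelyRegularSpace (ZoomCarrier Y X) := by
  refine completelyRegularSpace_iff_isOpen.2 fun z O hO hzO => ?_
  rcases z with y | ⟨i, x⟩
  · obtain ⟨U, hU, hUO⟩ := mem_comap.1 (nhds_inl (X := X) y ▸ hO.mem_nhds hzO)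
    obtain ⟨f, hf, hfy, hfU⟩ := CompletelyRegularSpace.completely_regular_isOpen (y : Y)
      (interior U) isOpen_interior (mem_interior_iff_mem_nhds.2 hU)
    exact ⟨f ∘ proj, hf.comp continuous_proj, hfy,
      fun w hw => hfU fun hwU => hw (hUO (show proj w ∈ U from interior_subset hwU))⟩
  · obtain ⟨f, hf, hfx, hfO⟩ := CompletelyRegularSpace.completely_regular_isOpen x
      (mk i ⁻¹' O) (hO.preimage (continuous_mk i)) hzO
    refine ⟨Function.extend (mk i) f 1, continuous_extend_mk i hf 1,
      ((mk_injective i).extend_apply _ _ x).trans hfx, fun w hw => ?_⟩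
    by_cases hw' : ∃ a, mk i a = w
    · obtain ⟨a, rfl⟩ := hw'
      exact ((mk_injective i).extend_apply _ _ a).trans (hfO hw)
    · exact Function.extend_apply' _ _ _ hw'

instance [T35Space Y] [∀ i, T35Space (X i)] : T35Space (ZoomCarrier Y X) where

end Separation

section Compactness

variable {Y : Type u} [TopologicalSpace Y] {X : IsolPts Y → Type v}
  [∀ i, TopologicalSpace (X i)]

lemma exists_clusterPt_or_neBot_of_clusterPt_map_proj {F : Filter (ZoomCarrier Y X)} {y : Y}
    (hy : ClusterPt y (map proj F)) :
    (∃ z, ClusterPt z F) ∨ ∃ i, (F ⊓ 𝓟 (range (mk i))).NeBot := by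
  have hF : (comap proj (𝓝 y) ⊓ F).NeBot := by
    rwa [← map_neBot_iff proj, Filter.push_pull']
  by_cases hiso : y ∈ IsolPts Y
  · rw [(isOpen_singleton_iff_nhds_eq_pure y).1 hiso, ← principal_singleton, comap_principal,
      inf_comm] at hF
    exact Or.inr ⟨⟨y, hiso⟩, by rwa [range_mk]⟩
  · exact Or.inl ⟨inl ⟨y, hiso⟩, by rwa [ClusterPt, nhds_inl]⟩

instance [CompactSpace Y] [∀ i, CompactSpace (X i)] : CompactSpace (ZoomCarrier Y X) := by
  refine ⟨fun F _ _ => ?_⟩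
  obtain ⟨y, -, hy⟩ := isCompact_univ (f := map proj F) (le_principal_iff.2 univ_mem)
  rcases exists_clusterPt_or_neBot_of_clusterPt_map_proj hy with ⟨z, hz⟩ | ⟨i, hi⟩
  · exact ⟨z, trivial, hz⟩
  · obtain ⟨z, -, hz⟩ := isCompact_range (continuous_mk i) (inf_le_right (a := F))
    exact ⟨z, trivial, hz.mono inf_le_left⟩

instance [LindelofSpace Y] [∀ i, LindelofSpace (X i)] : LindelofSpace (ZoomCarrier Y X) := by
  refine ⟨fun F _ _ _ => ?_⟩
  obtain ⟨y, -, hy⟩ := isLindelof_univ (f := map proj F) (le_principal_iff.2 univ_mem)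
  rcases exists_clusterPt_or_neBot_of_clusterPt_map_proj hy with ⟨z, hz⟩ | ⟨i, hi⟩
  · exact ⟨z, trivial, hz⟩
  · obtain ⟨z, -, hz⟩ := isLindelof_range (continuous_mk i) (inf_le_right (a := F))
    exact ⟨z, trivial, hz.mono inf_le_left⟩

end Compactness

section DenseSubspace

variable {Y : Type u} [TopologicalSpace Y] [T1Space Y] {D : Set Y} (hD : Dense D)
  {X : IsolPts Y → Type v} (A : ∀ i, Set (X i))

def inclusion : ZoomCarrier D (fun j => A (isolPtsEquivOfDense hD j)) → ZoomCarrier Y X :=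
  Sum.elim (fun y => inl ⟨y.1, mt (mem_isolPts_subtype_iff hD y.1).2 y.2⟩)
    fun p => mk (isolPtsEquivOfDense hD p.1) p.2.1

lemma proj_inclusion (z : ZoomCarrier D (fun j => A (isolPtsEquivOfDense hD j))) :
    proj (inclusion hD A z) = ((proj z : D) : Y) := by
  rcases z with _ | _ <;> rfl

lemma inclusion_injective : Function.Injective (inclusion hD A) := by
  rintro (y | ⟨j, a⟩) (y' | ⟨j', a'⟩) h
  · exact congrArg inl (Subtype.ext (Subtype.ext (congrArg proj h)))
  · exact (Sum.inl_ne_inr h).elim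
  · exact (Sum.inr_ne_inl h).elim
  · obtain rfl : j = j' := Subtype.ext (Subtype.ext (congrArg proj h))
    exact congrArg (mk j) (Subtype.ext (mk_injective _ h))

lemma preimage_inclusion_preimage_proj (U : Set Y) :
    inclusion hD A ⁻¹' (proj ⁻¹' U) = proj ⁻¹' (Subtype.val ⁻¹' U) := by
  ext (_ | _) <;> rfl

lemma preimage_inclusion_image_mk (j : IsolPts D) (W : Set (X (isolPtsEquivOfDense hD j))) :
    inclusion hD A ⁻¹' (mk _ '' W) = mk j '' (Subtype.val ⁻¹' W) := by
  ext z
  refine ⟨fun ⟨x, hx, hxz⟩ => ?_, fun ⟨a, ha, hz⟩ => ⟨a, ha, hz ▸ rfl⟩⟩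
  have hzj : z ∈ range (mk j) := by
    rw [range_mk]
    exact Subtype.ext ((proj_inclusion hD A z).symm.trans (congrArg proj hxz).symm)
  obtain ⟨a, rfl⟩ := hzj
  exact ⟨a, show (a : X _) ∈ W from mk_injective _ hxz ▸ hx, rfl⟩

lemma inclusion_ofSelector (s : ∀ i, X i) (hs : ∀ i, s i ∈ A i) (y : D) :
    inclusion hD A (ofSelector (fun _ => ⟨s _, hs _⟩) y) = ofSelector s y := by
  by_cases hy : (y : Y) ∈ IsolPts Y
  · exact (congrArg _ (ofSelector_coe _ ⟨y, (mem_isolPts_subtype_iff hD y).2 hy⟩)).trans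
      (ofSelector_coe s ⟨y, hy⟩).symm
  · exact (congrArg _ (ofSelector_of_notMem _ (mt (mem_isolPts_subtype_iff hD y).1 hy))).trans
      (ofSelector_of_notMem s hy).symm

variable [∀ i, TopologicalSpace (X i)]

lemma isEmbedding_inclusion : IsEmbedding (inclusion hD A) := by
  refine ⟨⟨?_⟩, inclusion_injective hD A⟩
  rw [zoomTopology_eq_generateFrom, zoomTopology_eq_generateFrom, induced_generateFrom_eq]
  congr 1
  ext B
  constructor
  · rintro (⟨j, _, hW', rfl⟩ | ⟨_, hU', rfl⟩)
    · obtain ⟨W, hW, rfl⟩ := isOpen_induced_iff.1 hW'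
      exact ⟨_, Or.inl ⟨_, W, hW, rfl⟩, preimage_inclusion_image_mk hD A j W⟩
    · obtain ⟨U, hU, rfl⟩ := isOpen_induced_iff.1 hU'
      exact ⟨_, Or.inr ⟨U, hU, rfl⟩, preimage_inclusion_preimage_proj hD A U⟩
  · rintro ⟨_, ⟨i, W, hW, rfl⟩ | ⟨U, hU, rfl⟩, rfl⟩
    · obtain ⟨j, rfl⟩ := (isolPtsEquivOfDense hD).surjective i
      exact Or.inl ⟨j, _, hW.preimage continuous_subtype_val,
        preimage_inclusion_image_mk hD A j W⟩
    · exact Or.inr ⟨_, hU.preimage continuous_subtype_val,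
        preimage_inclusion_preimage_proj hD A U⟩

lemma denseRange_inclusion (hA : ∀ i, Dense (A i)) (hne : ∀ i, (A i).Nonempty) :
    DenseRange (inclusion hD A) := by
  choose s hs using hne
  rintro (y | ⟨i, x⟩)
  · have hsub : ofSelector s '' D ⊆ range (inclusion hD A) := by
      rintro _ ⟨y, hy, rfl⟩
      exact ⟨_, inclusion_ofSelector hD A s hs ⟨y, hy⟩⟩
    exact closure_mono hsub (image_closure_subset_closure_image (continuous_ofSelector s)
      ⟨y, hD y, ofSelector_of_notMem s y.2⟩)
  · have hsub : mk i '' A i ⊆ range (inclusion hD A) := by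
      obtain ⟨j, rfl⟩ := (isolPtsEquivOfDense hD).surjective i
      rintro _ ⟨a, ha, rfl⟩
      exact ⟨mk j ⟨a, ha⟩, rfl⟩
    exact closure_mono hsub (image_closure_subset_closure_image (continuous_mk i)
      ⟨x, hA i x, rfl⟩)

end DenseSubspace

end ZoomCarrier

/-- Basic properties of zoom spaces: (i) `Z(Y, X)` is Tychonoff, `Y` is
a quotient of it, each `X i` is homeomorphic to a clopen subspace, and for each selector
`s` the set `(Y ∖ I_Y) ∪ s(I_Y)` is a closed copy of `Y`; (ii) the zoom space of dense
subspaces embeds (densely) into the zoom space; (iii) zoom spaces of compact (Lindelöf)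
spaces are compact (Lindelöf); (iv) zoom spaces of compactifications are
compactifications of the zoom space. -/
theorem zoom_space_basic_properties :
    -- (i)
    (∀ (Y : Type u) (_ : TopologicalSpace Y) (_ : T35Space Y)
        (X : IsolPts Y → Type u) (_ : ∀ i, TopologicalSpace (X i))
        (_ : ∀ i, T35Space (X i)) (_ : ∀ i, Nonempty (X i)),
      T35Space (ZoomCarrier Y X) ∧
      (∃ q : ZoomCarrier Y X → Y, IsQuotientMap q) ∧
      (∀ i : IsolPts Y, ∃ e : X i → ZoomCarrier Y X,
          IsEmbedding e ∧ IsClopen (Set.range e)) ∧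
      (∀ s : (i : IsolPts Y) → X i, ∃ e : Y → ZoomCarrier Y X,
          IsClosedEmbedding e ∧
          Set.range e =
            Set.range (Sum.inl : { y : Y // y ∉ IsolPts Y } → ZoomCarrier Y X) ∪
            Set.range (fun i : IsolPts Y => (Sum.inr ⟨i, s i⟩ : ZoomCarrier Y X)))) ∧
    -- (ii)
    (∀ (Yb : Type u) (_ : TopologicalSpace Yb) (_ : T35Space Yb)
        (Xb : IsolPts Yb → Type u) (_ : ∀ i, TopologicalSpace (Xb i))
        (_ : ∀ i, T35Space (Xb i))
        (Ys : Set Yb) (_ : Dense Ys)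
        (A : ∀ i : IsolPts Yb, Set (Xb i)) (_ : ∀ i, (A i).Nonempty),
      ∃ ι : IsolPts (↥Ys) ≃ IsolPts Yb,
        (∀ j : IsolPts (↥Ys), ((ι j : Yb)) = ((j : ↥Ys) : Yb)) ∧
        ∃ e : ZoomCarrier ↥Ys (fun j => ↥(A (ι j))) → ZoomCarrier Yb Xb,
          IsEmbedding e ∧ ((∀ i, Dense (A i)) → DenseRange e)) ∧
    -- (iii)
    (∀ (Y : Type u) (_ : TopologicalSpace Y) (_ : T35Space Y)
        (X : IsolPts Y → Type u) (_ : ∀ i, TopologicalSpace (X i))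
        (_ : ∀ i, T35Space (X i)) (_ : ∀ i, Nonempty (X i)),
      (CompactSpace Y → (∀ i, CompactSpace (X i)) → CompactSpace (ZoomCarrier Y X)) ∧
      (LindelofSpace Y → (∀ i, LindelofSpace (X i)) → LindelofSpace (ZoomCarrier Y X))) ∧
    -- (iv)
    (∀ (cY : Type u) (_ : TopologicalSpace cY) (_ : CompactSpace cY) (_ : T2Space cY)
        (Xb : IsolPts cY → Type u) (_ : ∀ i, TopologicalSpace (Xb i))
        (_ : ∀ i, CompactSpace (Xb i)) (_ : ∀ i, T2Space (Xb i))
        (Ys : Set cY) (_ : Dense Ys)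
        (A : ∀ i : IsolPts cY, Set (Xb i)) (_ : ∀ i, (A i).Nonempty)
        (_ : ∀ i, Dense (A i)),
      CompactSpace (ZoomCarrier cY Xb) ∧ T2Space (ZoomCarrier cY Xb) ∧
      ∃ ι : IsolPts (↥Ys) ≃ IsolPts cY,
        (∀ j : IsolPts (↥Ys), ((ι j : cY)) = ((j : ↥Ys) : cY)) ∧
        ∃ e : ZoomCarrier ↥Ys (fun j => ↥(A (ι j))) → ZoomCarrier cY Xb,
          IsEmbedding e ∧ DenseRange e) := by
  open ZoomCarrier in
  refine ⟨?_, ?_, ?_, ?_⟩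
  · intro Y _ _ X _ _ _
    exact ⟨inferInstance, ⟨proj, isQuotientMap_proj⟩,
      fun i => ⟨mk i, (isOpenEmbedding_mk i).isEmbedding, isClopen_range_mk i⟩,
      fun s => ⟨ofSelector s, (leftInverse_proj_ofSelector s).isClosedEmbedding continuous_proj
        (continuous_ofSelector s), range_ofSelector s⟩⟩
  · intro Yb _ _ Xb _ _ Ys hd A hne
    exact ⟨isolPtsEquivOfDense hd, fun _ => rfl, inclusion hd A, isEmbedding_inclusion hd A,
      fun hA => denseRange_inclusion hd A hA hne⟩
  · intro Y _ _ X _ _ _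
    exact ⟨fun _ _ => inferInstance, fun _ _ => inferInstance⟩
  · intro cY _ _ _ Xb _ _ _ Ys hd A hne hA
    exact ⟨inferInstance, inferInstance, isolPtsEquivOfDense hd, fun _ => rfl, inclusion hd A,
      isEmbedding_inclusion hd A, denseRange_inclusion hd A hA hne⟩

end FBorelPaper
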